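/- arXiv:2107.11938 — 5 statements merged into one kernel-verified Lean document; each statement's English description precedes it below -/
import Mathlib

section
/- For ε > 0 and h > 0, the derivative χ'(z) = ε + h·e^{−zh} of χ(z) = εz + 1 − e^{−zh} is nonzero at every zero of χ; equivalently, every zero z₀ of χ satisfies ε + h(ε·z₀ + 1) ≠ 0. -/
theorem chi_deriv_nonzero_at_zero (ε h : ℝ) (hε : 0 < ε) (hh : 0 < h) :
    ∀ z₀ : ℂ, (ε : ℂ) * z₀ + 1 - Complex.exp (-z₀ * h) = 0 →
      (ε : ℂ) + (h : ℂ) * ((ε : ℂ) * z₀ + 1) ≠ 0 := by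
  intro z hz hc
  have hεC : (ε : ℂ) ≠ 0 := Complex.ofReal_ne_zero.mpr hε.ne'
  have hhC : (h : ℂ) ≠ 0 := Complex.ofReal_ne_zero.mpr hh.ne'
  -- from hc : ε z + 1 = -ε/h
  have h1 : (ε : ℂ) * z + 1 = -(ε : ℂ) / h := by
    field_simp at hc ⊢
    linear_combination hc
  -- solve for z
  have hzval : z = (-(ε : ℂ) / h - 1) / ε := by
    field_simp at h1 ⊢
    linear_combination h1
  have h2 : -z * h = ((1 + h / ε : ℝ) : ℂ) := by
    rw [hzval]
    push_cast
    field_simp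
    ring
  have h3 : Complex.exp (-z * h) = (ε : ℂ) * z + 1 := by
    linear_combination -hz
  rw [h2, ← Complex.ofReal_exp, h1] at h3
  have h4 : (Real.exp (1 + h / ε) : ℂ) = ((-ε / h : ℝ) : ℂ) := by
    rw [h3]; push_cast; ring
  have h5 : Real.exp (1 + h / ε) = -ε / h := Complex.ofReal_injective h4
  have : (0:ℝ) < -ε / h := h5 ▸ Real.exp_pos _
  have : -ε / h < 0 := div_neg_of_neg_of_pos (neg_neg_of_pos hε) hh
  linarith
end

section
/- For ε > 0 and h > 0, the only zero of χ(z) = εz + 1 − e^{−zh} with nonnegative real part is z = 0. -/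
/-! On the closed right half-plane `‖exp (-z h)‖ = exp (-h Re z) ≤ 1`, whereas `εz + 1` lies in the
half-plane `Re ≥ 1`, which meets the closed unit disc only at `1`. Hence `χ(z) = 0` forces
`εz = 0`. -/

namespace Complex

theorem norm_exp_neg_le_one {w : ℂ} (hw : 0 ≤ w.re) : ‖exp (-w)‖ ≤ 1 := by
  rw [norm_exp, neg_re, Real.exp_le_one_iff]
  exact neg_nonpos.mpr hw

theorem eq_zero_of_norm_one_add_le_one {u : ℂ} (hu : 0 ≤ u.re) (h : ‖1 + u‖ ≤ 1) : u = 0 := by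
  have hsq : (1 + u.re) ^ 2 + u.im ^ 2 ≤ 1 := by
    have := pow_le_one₀ (n := 2) (norm_nonneg _) h
    rwa [Complex.sq_norm, normSq_apply, add_re, add_im, one_re, one_im, zero_add, ← sq, ← sq]
      at this
  have hre : u.re = 0 := by nlinarith [sq_nonneg u.im]
  have him : u.im = 0 := by nlinarith [sq_nonneg u.im]
  exact Complex.ext hre him

end Complex

theorem chi_zero_nonneg_re (ε h : ℝ) (hε : 0 < ε) (hh : 0 < h) :
    ∀ z : ℂ, (ε : ℂ) * z + 1 - Complex.exp (-z * h) = 0 → 0 ≤ z.re → z = 0 := by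
  intro z hz hre
  have hexp : Complex.exp (-(z * h)) = 1 + ε * z := by rw [← neg_mul]; linear_combination -hz
  have hzh : 0 ≤ (z * h).re := by
    simpa using mul_nonneg hre hh.le
  have hεz : 0 ≤ ((ε : ℂ) * z).re := by
    simpa using mul_nonneg hε.le hre
  have hnorm : ‖1 + (ε : ℂ) * z‖ ≤ 1 := hexp ▸ Complex.norm_exp_neg_le_one hzh
  have hεz_zero := Complex.eq_zero_of_norm_one_add_le_one hεz hnorm
  exact (mul_eq_zero.mp hεz_zero).resolve_left (Complex.ofReal_ne_zero.mpr hε.ne')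
end

section
/- Let A : [−h, ∞) → ℝ be continuous, differentiable on (0, ∞), satisfying A'(t) = q(A(t−h) − A(t)) for t ≥ 0, with q, h > 0. If A converges to a limit A_∞ at +∞ and A' is integrable on [0,∞), then A_∞(1 + qh) = A(0) + q∫_{−h}^{0} A(s) ds. -/
/-!
Integrating the equation over `[0, T]`, the delay term telescopes into two windows of length `h`:
`A T - A 0 = q (∫_{-h}^0 A - ∫_{T-h}^T A)`. As `T → ∞` the left side tends to `A_∞ - A 0` and
the window integral `∫_{T-h}^T A` to `h A_∞`.
-/

open Filter Set Topology MeasureTheory intervalIntegral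

section Integrals

variable {E : Type*} [NormedAddCommGroup E]

theorem ContinuousOn.intervalIntegrable_of_Ici {f : ℝ → E} {c a b : ℝ}
    (hf : ContinuousOn f (Ici c)) (ha : c ≤ a) (hb : c ≤ b) :
    IntervalIntegrable f volume a b :=
  (hf.mono fun _ hx ↦ (le_min ha hb).trans hx.1).intervalIntegrable

variable [NormedSpace ℝ E]

theorem integral_comp_sub_right_sub_eq {f : ℝ → E} {a b h : ℝ}
    (hshift : IntervalIntegrable f volume (a - h) (b - h))
    (hab : IntervalIntegrable f volume a b) (hstart : IntervalIntegrable f volume (a - h) a) :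
    ∫ t in a..b, (f (t - h) - f t) =
      (∫ t in (a - h)..a, f t) - ∫ t in (b - h)..b, f t := by
  have hcomp : IntervalIntegrable (fun t ↦ f (t - h)) volume a b := by
    simpa using hshift.comp_sub_right h
  rw [integral_sub hcomp hab, integral_comp_sub_right,
    integral_interval_sub_interval_comm hshift hab hstart]

theorem tendsto_integral_window_atTop [CompleteSpace E] {f : ℝ → E} {L : E}
    (hf : Tendsto f atTop (𝓝 L)) (h : ℝ)
    (hint : ∀ᶠ T in atTop, IntervalIntegrable f volume (T - h) T) :
    Tendsto (fun T ↦ ∫ t in (T - h)..T, f t) atTop (𝓝 (h • L)) := by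
  rw [Metric.tendsto_nhds]
  intro ε hε
  -- `|h| + 1` rather than `|h|`, so that `h = 0` needs no separate case
  obtain ⟨N, hN⟩ := Metric.tendsto_atTop.1 hf (ε / (|h| + 1)) (by positivity)
  filter_upwards [hint, eventually_ge_atTop (N + |h|)] with T hT hTN
  have hsub : (∫ t in (T - h)..T, f t) - h • L = ∫ t in (T - h)..T, (f t - L) := by
    rw [integral_sub hT intervalIntegrable_const, intervalIntegral.integral_const,
      sub_sub_cancel]
  have hclose : ∀ x ∈ uIoc (T - h) T, ‖f x - L‖ ≤ ε / (|h| + 1) := by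
    intro x hx
    have hNx : N ≤ x := by
      rcases mem_uIoc.1 hx with hx | hx <;> linarith [neg_abs_le h, le_abs_self h]
    exact (dist_eq_norm (f x) L ▸ hN x hNx).le
  calc dist (∫ t in (T - h)..T, f t) (h • L)
      ≤ ε / (|h| + 1) * |T - (T - h)| := by
        rw [dist_eq_norm, hsub]
        exact norm_integral_le_of_norm_le_const hclose
    _ = ε * (|h| / (|h| + 1)) := by rw [sub_sub_cancel]; ring
    _ < ε := mul_lt_of_lt_one_right hε ((div_lt_one (by positivity)).2 (lt_add_one _))

end Integrals

theorem sub_eq_integral_window_of_hasDerivAt_delay {A : ℝ → ℝ} {q h T : ℝ} (hh : 0 ≤ h)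
    (hcont : ContinuousOn A (Ici (-h)))
    (hode : ∀ t ≥ (0 : ℝ), HasDerivAt A (q * (A (t - h) - A t)) t) (hT : 0 ≤ T) :
    A T - A 0 = q * ((∫ s in (-h)..0, A s) - ∫ s in (T - h)..T, A s) := by
  have hint : ∀ a b, -h ≤ a → -h ≤ b → IntervalIntegrable A volume a b :=
    fun _ _ ↦ hcont.intervalIntegrable_of_Ici
  have hdelayed : IntervalIntegrable (fun t ↦ A (t - h)) volume 0 T := by
    simpa using (hint (-h) (T - h) le_rfl (by linarith)).comp_sub_right h
  have hderiv : IntervalIntegrable (fun t ↦ q * (A (t - h) - A t)) volume 0 T :=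
    (hdelayed.sub (hint 0 T (by linarith) (by linarith))).const_mul q
  rw [← integral_eq_sub_of_hasDerivAt (fun t ht ↦ hode t (uIcc_of_le hT ▸ ht).1) hderiv,
    intervalIntegral.integral_const_mul, integral_comp_sub_right_sub_eq, zero_sub]
  all_goals apply hint <;> linarith

theorem delay_eq_limit_identity_general (q h : ℝ) (hh : 0 < h)
    (A : ℝ → ℝ) (Ainf : ℝ)
    (hcont : ContinuousOn A (Set.Ici (-h)))
    (hode : ∀ t ≥ (0 : ℝ), HasDerivAt A (q * (A (t - h) - A t)) t)
    (hlim : Filter.Tendsto A Filter.atTop (nhds Ainf)) :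
    Ainf * (1 + q * h) = A 0 + q * ∫ s in (-h)..0, A s := by
  have hwindow : Tendsto (fun T ↦ ∫ s in (T - h)..T, A s) atTop (𝓝 (h * Ainf)) :=
    tendsto_integral_window_atTop hlim h <| (eventually_ge_atTop 0).mono fun T hT ↦
      hcont.intervalIntegrable_of_Ici (by linarith) (by linarith)
  have hrhs : Tendsto (fun T ↦ q * ((∫ s in (-h)..0, A s) - ∫ s in (T - h)..T, A s)) atTop
      (𝓝 (q * ((∫ s in (-h)..0, A s) - h * Ainf))) :=
    (tendsto_const_nhds.sub hwindow).const_mul q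
  have hlhs : Tendsto (fun T ↦ A T - A 0) atTop
      (𝓝 (q * ((∫ s in (-h)..0, A s) - h * Ainf))) :=
    hrhs.congr' <| (eventually_ge_atTop 0).mono fun T hT ↦
      (sub_eq_integral_window_of_hasDerivAt_delay hh.le hcont hode hT).symm
  have hAinf := tendsto_nhds_unique (hlim.sub_const (A 0)) hlhs
  linear_combination hAinf

theorem delay_eq_limit_identity (q h : ℝ) (hq : 0 < q) (hh : 0 < h)
    (A : ℝ → ℝ) (Ainf : ℝ)
    (hcont : ContinuousOn A (Set.Ici (-h)))
    (hode : ∀ t ≥ (0 : ℝ), HasDerivAt A (q * (A (t - h) - A t)) t)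
    (hlim : Filter.Tendsto A Filter.atTop (nhds Ainf))
    (hint : MeasureTheory.IntegrableOn (deriv A) (Set.Ici 0)) :
    Ainf * (1 + q * h) = A 0 + q * ∫ s in (-h)..0, A s :=
  delay_eq_limit_identity_general q h hh A Ainf hcont hode hlim
end

section
/- The solution of the delay equation A'(t) = q(A(t−h) − A(t)) with continuous initial data A₀ on [−h,0] satisfies min_{[−h,0]} A₀ ≤ A(t) ≤ max_{[−h,0]} A₀ for all t ≥ −h. -/
/-!
For `q ≥ 0`, the equation `A' = q (A(t - h) - A)` relaxes `A(t)` towards its delayed value, so on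
each interval `[n h, (n + 1) h]` the function `(A t - M) e^{q t}` is antitone as soon as the delayed
values stay below `M`. Induction on `n` (the method of steps) propagates any upper bound of the
initial data to all times, and applying this to `-A` gives the lower bound.
-/

open Set

theorem le_of_hasDerivAt_relaxation {f g : ℝ → ℝ} {q M a b : ℝ} (hq : 0 ≤ q)
    (hf : ContinuousOn f (Icc a b)) (hf' : ∀ x ∈ Ioo a b, HasDerivAt f (q * (g x - f x)) x)
    (hg : ∀ x ∈ Ioo a b, g x ≤ M) (ha : f a ≤ M) : ∀ x ∈ Icc a b, f x ≤ M := by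
  set φ : ℝ → ℝ := fun x => (f x - M) * Real.exp (q * x)
  have hφ' : ∀ x ∈ Ioo a b, HasDerivAt φ (q * (g x - M) * Real.exp (q * x)) x := by
    intro x hx
    have hexp : HasDerivAt (fun y => Real.exp (q * y)) (Real.exp (q * x) * q) x := by
      simpa using ((hasDerivAt_id x).const_mul q).exp
    exact (((hf' x hx).sub_const M).mul hexp).congr_deriv (by ring)
  have hφ_anti : AntitoneOn φ (Icc a b) := by
    refine antitoneOn_of_deriv_nonpos (convex_Icc a b)
      (hf.sub continuousOn_const |>.mul (by fun_prop)) ?_ ?_ <;> rw [interior_Icc]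
    · exact fun x hx => (hφ' x hx).differentiableAt.differentiableWithinAt
    · intro x hx
      rw [(hφ' x hx).deriv]
      have := hg x hx
      exact mul_nonpos_of_nonpos_of_nonneg (mul_nonpos_of_nonneg_of_nonpos hq (by linarith))
        (Real.exp_pos _).le
  intro x hx
  have hφx : φ x ≤ 0 := calc
    φ x ≤ φ a := hφ_anti ⟨le_rfl, hx.1.trans hx.2⟩ hx hx.1
    _ ≤ 0 := mul_nonpos_of_nonpos_of_nonneg (by linarith) (Real.exp_pos _).le
  have := Real.exp_pos (q * x)
  nlinarith

section DelayEquation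

variable {q h : ℝ} {A : ℝ → ℝ}

theorem delay_le_of_initial_le (hq : 0 ≤ q) (hh : 0 < h)
    (hcont : ContinuousOn A (Ici (-h)))
    (hode : ∀ t ≥ (0 : ℝ), HasDerivAt A (q * (A (t - h) - A t)) t)
    {M : ℝ} (hM : ∀ s ∈ Icc (-h) 0, A s ≤ M) : ∀ t ≥ -h, A t ≤ M := by
  have steps : ∀ n : ℕ, ∀ t ∈ Icc (-h) (n * h), A t ≤ M := by
    intro n
    induction n with
    | zero => simpa using hM
    | succ n ih =>
      rintro t ⟨ht₀, ht⟩
      push_cast at ht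
      have hnh : 0 ≤ (n : ℝ) * h := by positivity
      rcases le_total t (n * h) with hle | hge
      · exact ih t ⟨ht₀, hle⟩
      refine le_of_hasDerivAt_relaxation (g := fun x => A (x - h)) (a := n * h) (b := n * h + h)
        hq (hcont.mono fun x hx => by simp only [mem_Ici]; linarith [hx.1])
        (fun x hx => hode x (by linarith [hx.1]))
        (fun x hx => ih (x - h) ⟨by linarith [hx.1], by linarith [hx.2]⟩)
        (ih _ ⟨by linarith, le_rfl⟩) t ⟨hge, by linarith⟩
  intro t ht
  obtain ⟨n, hn⟩ := exists_nat_ge (t / h)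
  exact steps n t ⟨ht, (div_le_iff₀ hh).1 hn⟩

theorem delay_mem_Icc_of_initial_mem_Icc (hq : 0 ≤ q) (hh : 0 < h)
    (hcont : ContinuousOn A (Ici (-h)))
    (hode : ∀ t ≥ (0 : ℝ), HasDerivAt A (q * (A (t - h) - A t)) t)
    {m M : ℝ} (hmM : ∀ s ∈ Icc (-h) 0, A s ∈ Icc m M) : ∀ t ≥ -h, A t ∈ Icc m M := by
  have hneg : ∀ t ≥ -h, -A t ≤ -m :=
    delay_le_of_initial_le (A := (-A ·)) hq hh hcont.neg
      (fun t ht => ((hode t ht).neg).congr_deriv (by ring))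
      (fun s hs => neg_le_neg (hmM s hs).1)
  exact fun t ht => ⟨neg_le_neg_iff.1 (hneg t ht),
    delay_le_of_initial_le hq hh hcont hode (fun s hs => (hmM s hs).2) t ht⟩

end DelayEquation

theorem delay_eq_max_principle (q h : ℝ) (hq : 0 < q) (hh : 0 < h)
    (A : ℝ → ℝ)
    (hcont : ContinuousOn A (Set.Ici (-h)))
    (hode : ∀ t ≥ (0 : ℝ), HasDerivAt A (q * (A (t - h) - A t)) t) :
    ∀ t ≥ -h, sInf (A '' Set.Icc (-h) 0) ≤ A t ∧ A t ≤ sSup (A '' Set.Icc (-h) 0) := by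
  have hcompact : IsCompact (A '' Icc (-h) 0) :=
    isCompact_Icc.image_of_continuousOn (hcont.mono fun _ hx => hx.1)
  exact delay_mem_Icc_of_initial_mem_Icc hq.le hh hcont hode fun s hs =>
    ⟨csInf_le hcompact.bddBelow (mem_image_of_mem A hs),
      le_csSup hcompact.bddAbove (mem_image_of_mem A hs)⟩
end

section
/- For q > 0, h > 0, the zeros of F(z) = z + q − q·e^{−zh} in the open upper half-plane all satisfy Re z < 0 and Im z·h ∈ ⋃_{k≥0}(π + 2πk, 2π + 2πk); moreover, every zero z_j satisfies |z_j + q| = q·e^{−h·Re z_j}. -/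
open Real

lemma Real.exists_nat_mem_Ioo_of_sin_neg {x : ℝ} (hx : 0 < x) (hs : sin x < 0) :
    ∃ k : ℕ, x ∈ Set.Ioo (π + 2 * π * k) (2 * π + 2 * π * k) := by
  set k := ⌊x / (2 * π)⌋₊
  have h2π : 0 < 2 * π := by positivity
  have hlo : 2 * π * k ≤ x := by
    rw [mul_comm, ← le_div_iff₀ h2π]
    exact Nat.floor_le (div_pos hx h2π).le
  have hhi : x < 2 * π + 2 * π * k := by
    have := Nat.lt_floor_add_one (x / (2 * π))
    rw [div_lt_iff₀ h2π] at this
    linarith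
  have hsin_shift : sin (x - 2 * π * k) = sin x := by
    simpa [mul_comm] using sin_sub_nat_mul_two_pi x k
  have hπ : π < x - 2 * π * k := by
    by_contra! hle
    have := sin_nonneg_of_nonneg_of_le_pi (sub_nonneg.2 hlo) hle
    linarith
  exact ⟨k, by linarith, hhi⟩

section CharacteristicZeros

variable {q h : ℝ} {z : ℂ}

lemma norm_add_eq_of_add_eq_mul_exp (hq : 0 ≤ q) (hz : z + q = q * Complex.exp (-z * h)) :
    ‖z + q‖ = q * exp (-h * z.re) := by
  rw [hz, norm_mul, Complex.norm_exp, Complex.norm_real, Real.norm_of_nonneg hq]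
  congr 2
  simp only [neg_mul, Complex.neg_re, Complex.mul_re, Complex.ofReal_re, Complex.ofReal_im,
    mul_zero, sub_zero]
  ring

lemma im_eq_of_add_eq_mul_exp (hz : z + q = q * Complex.exp (-z * h)) :
    z.im = -(q * exp (-h * z.re) * sin (h * z.im)) := by
  have hexp_im : (Complex.exp (-z * h)).im = -(exp (-h * z.re) * sin (h * z.im)) := by
    rw [Complex.exp_im]
    simp only [neg_mul, Complex.neg_re, Complex.neg_im, Complex.mul_re, Complex.mul_im,
      Complex.ofReal_re, Complex.ofReal_im, mul_zero, sub_zero, sin_neg]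
    ring_nf
  have him := congrArg Complex.im hz
  rw [Complex.add_im, Complex.ofReal_im, add_zero, Complex.im_ofReal_mul, hexp_im] at him
  linarith

lemma sin_mul_im_neg_of_add_eq_mul_exp (hq : 0 < q) (hz : z + q = q * Complex.exp (-z * h))
    (him : 0 < z.im) : sin (h * z.im) < 0 := by
  have hzim := im_eq_of_add_eq_mul_exp hz
  by_contra! hsin
  have : 0 ≤ q * exp (-h * z.re) * sin (h * z.im) := by positivity
  linarith

/-- If `0 ≤ z.re`, then `q * exp (-h * z.re) ≤ q ≤ |z.re + q| < ‖z + q‖` since `z.im ≠ 0`. -/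
lemma re_neg_of_add_eq_mul_exp (hq : 0 < q) (hh : 0 < h)
    (hz : z + q = q * Complex.exp (-z * h)) (him : z.im ≠ 0) : z.re < 0 := by
  by_contra! hre
  have hle : ‖z + q‖ ≤ q := by
    rw [norm_add_eq_of_add_eq_mul_exp hq.le hz]
    exact mul_le_of_le_one_right hq.le (exp_le_one_iff.2 (by nlinarith))
  have hsq : ‖z + q‖ ^ 2 = (z.re + q) ^ 2 + z.im ^ 2 := by
    rw [Complex.sq_norm, Complex.normSq_apply]
    simp only [Complex.add_re, Complex.add_im, Complex.ofReal_re, Complex.ofReal_im, add_zero]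
    ring
  have hsq_le : ‖z + q‖ ^ 2 ≤ q ^ 2 := pow_le_pow_left₀ (norm_nonneg _) hle 2
  nlinarith [sq_pos_of_ne_zero him]

end CharacteristicZeros

theorem char_zeros_location (q h : ℝ) (hq : 0 < q) (hh : 0 < h) :
    (∀ z : ℂ, z + q - q * Complex.exp (-z * h) = 0 → 0 < z.im →
        z.re < 0 ∧ Real.sin (h * z.im) < 0 ∧
          ∃ k : ℕ, z.im * h ∈ Set.Ioo (Real.pi + 2 * Real.pi * k) (2 * Real.pi + 2 * Real.pi * k)) ∧
      ∀ z : ℂ, z + q - q * Complex.exp (-z * h) = 0 →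
        ‖z + q‖ = q * Real.exp (-h * z.re) := by
  refine ⟨fun z hz him => ?_, fun z hz => norm_add_eq_of_add_eq_mul_exp hq.le (sub_eq_zero.1 hz)⟩
  have hz' := sub_eq_zero.1 hz
  have hsin := sin_mul_im_neg_of_add_eq_mul_exp hq hz' him
  refine ⟨re_neg_of_add_eq_mul_exp hq hh hz' him.ne', hsin, ?_⟩
  rw [mul_comm] at hsin
  exact Real.exists_nat_mem_Ioo_of_sin_neg (by positivity) hsin
end
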